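/- arXiv:cs/0503065 — 2 statements merged into one kernel-verified Lean document; each statement's English description precedes it below -/
import Mathlib

section
/- Let Γ be a commutative square in the category of graphs with span G₁ ← G₀ → G₂ and cospan G₁ → G₃ ← G₂ (with morphisms ψ₁, ψ₂). If the underlying square of node sets is a pushout in Set, and every labeled node of G₃ lies in ψ₁(N₁^Ω) or ψ₂(N₂^Ω), then Γ is a pushout in the category of graphs. -/
open CategoryTheory

/-- A graph over a signature `Ω` with arity function `ar`: nodes, an (implicit) subset of
labeled nodes (those where `label` is `some`), and a successor function assigning to each
labeled node a string of nodes whose length is the arity of its label. Unlabeled nodes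
have no successors. -/
structure SigGraph (Ω : Type) (ar : Ω → ℕ) where
  N : Type
  label : N → Option Ω
  succ : N → List N
  hlen : ∀ n f, label n = some f → (succ n).length = ar f
  hnone : ∀ n, label n = none → succ n = []

namespace SigGraph

variable {Ω : Type} {ar : Ω → ℕ}

/-- A graph homomorphism: a map on nodes preserving labeledness, labels and successors. -/
@[ext]
structure Hom (G H : SigGraph Ω ar) where
  toFun : G.N → H.N
  map_label : ∀ n f, G.label n = some f → H.label (toFun n) = some f
  map_succ : ∀ n f, G.label n = some f → H.succ (toFun n) = (G.succ n).map toFun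

def Hom.id (G : SigGraph Ω ar) : Hom G G :=
  ⟨fun n => n, fun _ _ h => h, fun n _ _ => by simp⟩

def Hom.comp {G H K : SigGraph Ω ar} (φ : Hom G H) (ψ : Hom H K) : Hom G K where
  toFun := fun n => ψ.toFun (φ.toFun n)
  map_label := fun n f h => ψ.map_label _ f (φ.map_label n f h)
  map_succ := fun n f h => by
    rw [ψ.map_succ _ f (φ.map_label n f h), φ.map_succ n f h, List.map_map]; rfl

instance : Category (SigGraph Ω ar) where
  Hom := Hom
  id := Hom.id
  comp := Hom.comp
  id_comp := by intros; rfl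
  comp_id := by intros; rfl
  assoc := by intros; rfl

/-- An edge of a graph: a labeled node together with a position among its successors. -/
def Edge (G : SigGraph Ω ar) := Σ n : G.N, Fin (G.succ n).length

lemma Edge.label_isSome {G : SigGraph Ω ar} (e : G.Edge) : (G.label e.1).isSome := by
  have h2 : 0 < (G.succ e.1).length := Nat.lt_of_le_of_lt (Nat.zero_le _) e.2.isLt
  cases hl : G.label e.1 with
  | none => rw [G.hnone e.1 hl] at h2; simp at h2
  | some f => rfl

/-- The image of an edge under a homomorphism. -/
def Hom.edgeMap {G H : SigGraph Ω ar} (φ : Hom G H) (e : G.Edge) : H.Edge :=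
  ⟨φ.toFun e.1, ⟨e.2, by
    obtain ⟨f, hf⟩ := Option.isSome_iff_exists.mp e.label_isSome
    rw [φ.map_succ e.1 f hf, List.length_map]; exact e.2.isLt⟩⟩

open Classical in
/-- The disconnected graph `D(G,E)`: nodes of `G` plus a fresh unlabeled node `n[i]`
for each edge `(n,i) ∈ E`, with each edge of `E` redirected to its fresh node. -/
noncomputable def D (G : SigGraph Ω ar) (E : Set G.Edge) : SigGraph Ω ar where
  N := G.N ⊕ {e : G.Edge // e ∈ E}
  label := Sum.elim G.label fun _ => none
  succ := Sum.elim
    (fun n => List.ofFn fun i : Fin (G.succ n).length =>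
      if h : (⟨n, i⟩ : G.Edge) ∈ E then Sum.inr ⟨⟨n, i⟩, h⟩ else Sum.inl ((G.succ n).get i))
    (fun _ => [])
  hlen := by
    rintro (n | e) f h
    · simpa using G.hlen n f h
    · simp at h
  hnone := by
    rintro (n | e) h
    · simp only [Sum.elim_inl] at h ⊢
      simp [List.ofFn_eq_nil_iff, G.hnone n h]
    · rfl

/-- The connection homomorphism `δ_{G,E} : D(G,E) → G`. -/
noncomputable def delta (G : SigGraph Ω ar) (E : Set G.Edge) : Hom (G.D E) G where
  toFun := Sum.elim (fun n => n) (fun e => (G.succ e.1.1).get e.1.2)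
  map_label := by
    rintro (n | e) f h
    · exact h
    · simp [D] at h
  map_succ := by
    rintro (n | e) f h
    · simp only [D, Sum.elim_inl, List.map_ofFn]
      apply List.ext_getElem
      · simp
      · intro i h1 h2
        simp only [List.getElem_ofFn, Function.comp_apply]
        split <;> simp [List.get_eq_getElem]
    · simp [D] at h
end SigGraph
namespace SigGraph
variable {Ω : Type} {ar : Ω → ℕ}

/-- The underlying node map of the disconnected homomorphism `D_{φ,E}`. -/
def dmapFun {G H : SigGraph Ω ar} (φ : Hom G H) (E : Set G.Edge) :
    (G.D E).N → (H.D (φ.edgeMap '' E)).N :=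
  Sum.elim (fun n => Sum.inl (φ.toFun n))
    (fun e => Sum.inr ⟨φ.edgeMap e.1, Set.mem_image_of_mem _ e.2⟩)

/-- `μ` is `Ω`-injective if it is injective on labeled nodes. -/
def OmegaInjective {G H : SigGraph Ω ar} (μ : Hom G H) : Prop :=
  ∀ n n', (G.label n).isSome → (G.label n').isSome → μ.toFun n = μ.toFun n' → n = n'

/-- The conditions on the right leg `ρ : D(L,E) → R` of an LRR-rewrite rule:
unlabeled nodes of `L` are mapped to unlabeled nodes of `R`, injectively. -/
def IsLRRRule {L R : SigGraph Ω ar} (E : Set L.Edge) (ρ : Hom (L.D E) R) : Prop :=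
  (∀ n : L.N, L.label n = none → R.label (ρ.toFun (Sum.inl n)) = none) ∧
  (∀ n n' : L.N, L.label n = none → L.label n' = none →
      ρ.toFun (Sum.inl n) = ρ.toFun (Sum.inl n') → n = n')

section Span
variable {G₀ G₁ G₂ : SigGraph Ω ar}

/-- The relation on `N₁ + N₂` generated by a span: `φ₁(n₀) ∼ φ₂(n₀)`. -/
def spanRel (φ₁ : Hom G₀ G₁) (φ₂ : Hom G₀ G₂) : (G₁.N ⊕ G₂.N) → (G₁.N ⊕ G₂.N) → Prop :=
  fun x y => ∃ n₀, x = Sum.inl (φ₁.toFun n₀) ∧ y = Sum.inr (φ₂.toFun n₀)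

/-- Label of a node of the disjoint union. -/
def nodeLabel (G₁ G₂ : SigGraph Ω ar) : (G₁.N ⊕ G₂.N) → Option Ω :=
  Sum.elim G₁.label G₂.label

/-- Successors of a node of the disjoint union. -/
def nodeSucc (G₁ G₂ : SigGraph Ω ar) : (G₁.N ⊕ G₂.N) → List (G₁.N ⊕ G₂.N) :=
  Sum.elim (fun n => (G₁.succ n).map Sum.inl) (fun n => (G₂.succ n).map Sum.inr)

/-- A span of graphs is strongly labeled if in each equivalence class all labeled
nodes share the same label and have pairwise equivalent successors. -/
def StronglyLabeled (φ₁ : Hom G₀ G₁) (φ₂ : Hom G₀ G₂) : Prop :=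
  ∀ x y, Relation.EqvGen (spanRel φ₁ φ₂) x y →
    ∀ f g, nodeLabel G₁ G₂ x = some f → nodeLabel G₁ G₂ y = some g →
      f = g ∧ List.Forall₂ (Relation.EqvGen (spanRel φ₁ φ₂)) (nodeSucc G₁ G₂ x) (nodeSucc G₁ G₂ y)

open Classical in
/-- The candidate pushout graph of a span: nodes are the quotient of `N₁ + N₂`,
labeled classes are those containing a labeled node, labels and successors are
taken from a (chosen) labeled representative. -/
noncomputable def pushoutGraph (φ₁ : Hom G₀ G₁) (φ₂ : Hom G₀ G₂) : SigGraph Ω ar where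
  N := Quot (spanRel φ₁ φ₂)
  label := fun c =>
    if h : ∃ x, Quot.mk _ x = c ∧ (nodeLabel G₁ G₂ x).isSome
    then nodeLabel G₁ G₂ h.choose else none
  succ := fun c =>
    if h : ∃ x, Quot.mk _ x = c ∧ (nodeLabel G₁ G₂ x).isSome
    then (nodeSucc G₁ G₂ h.choose).map (Quot.mk _) else []
  hlen := by
    intro c f h
    try dsimp only at h ⊢
    by_cases hx : ∃ x, Quot.mk _ x = c ∧ (nodeLabel G₁ G₂ x).isSome
    · rw [dif_pos hx] at h ⊢
      rw [List.length_map]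
      rcases hc : hx.choose with n | n <;> rw [hc] at h <;>
        simp only [nodeLabel, nodeSucc, Sum.elim_inl, Sum.elim_inr] at h ⊢ <;>
        rw [List.length_map]
      · exact G₁.hlen n f h
      · exact G₂.hlen n f h
    · rw [dif_neg hx] at h; simp at h
  hnone := by
    intro c h
    try dsimp only at h ⊢
    by_cases hx : ∃ x, Quot.mk _ x = c ∧ (nodeLabel G₁ G₂ x).isSome
    · rw [dif_pos hx] at h
      have := hx.choose_spec.2
      rw [h] at this; simp at this
    · rw [dif_neg hx]

end Span

open Classical in
/-- The disconnected graph `D̄(G,o)`: `G` plus a fresh unlabeled node `mr`, with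
all edges targeting `o` redirected to `mr`. -/
noncomputable def Dbar (G : SigGraph Ω ar) (o : G.N) : SigGraph Ω ar where
  N := G.N ⊕ Unit
  label := Sum.elim G.label fun _ => none
  succ := Sum.elim
    (fun n => (G.succ n).map fun t => if t = o then Sum.inr () else Sum.inl t)
    (fun _ => [])
  hlen := by
    rintro (n | u) f h
    · simp only [Sum.elim_inl] at h ⊢
      rw [List.length_map]; exact G.hlen n f h
    · simp at h
  hnone := by
    rintro (n | u) h
    · simp only [Sum.elim_inl] at h ⊢
      rw [G.hnone n h]; rfl
    · rfl

open Classical in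
/-- The homomorphism `δ_μ : D̄(G,o) → G`, identity on `N_G`, sending `mr` to `o`. -/
noncomputable def deltaBar (G : SigGraph Ω ar) (o : G.N) : Hom (G.Dbar o) G where
  toFun := Sum.elim (fun n => n) fun _ => o
  map_label := by
    rintro (n | u) f h
    · exact h
    · simp [Dbar] at h
  map_succ := by
    rintro (n | u) f h
    · simp only [Dbar, Sum.elim_inl, List.map_map]
      symm
      refine (List.map_congr_left ?_).trans (List.map_id _)
      intro t ht
      by_cases h' : t = o <;> simp [h']
    · simp [Dbar] at h

open Classical in
/-- The graph obtained from `U` by redirecting all edges targeting `a` towards `b`. -/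
noncomputable def redirect (U : SigGraph Ω ar) (a b : U.N) : SigGraph Ω ar where
  N := U.N
  label := U.label
  succ := fun n => (U.succ n).map fun t => if t = a then b else t
  hlen := by intro n f h; (try dsimp only); rw [List.length_map]; exact U.hlen n f h
  hnone := by intro n h; (try dsimp only); rw [U.hnone n h]; rfl

/-- The graph `P` with two unlabeled nodes: `false` is `ar`, `true` is `pr`. -/
def P (Ω : Type) (ar : Ω → ℕ) : SigGraph Ω ar :=
  ⟨Bool, fun _ => none, fun _ => [], fun _ _ h => by simp at h, fun _ _ => rfl⟩

/-- The switch graph `SW` with three unlabeled nodes: `some false` is `ar`,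
`some true` is `pr`, `none` is `mr`. -/
def SW (Ω : Type) (ar : Ω → ℕ) : SigGraph Ω ar :=
  ⟨Option Bool, fun _ => none, fun _ => [], fun _ _ h => by simp at h, fun _ _ => rfl⟩

/-- `λ : SW → P`, sending `ar, mr ↦ ar` and `pr ↦ pr`. -/
def lamGR : Hom (SW Ω ar) (P Ω ar) :=
  ⟨fun x => x.getD false, fun _ _ h => by simp [SW] at h, fun _ _ h => by simp [SW] at h⟩

/-- `ρ : SW → P`, sending `ar ↦ ar` and `pr, mr ↦ pr`. -/
def rhoGR : Hom (SW Ω ar) (P Ω ar) :=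
  ⟨fun x => x.getD true, fun _ _ h => by simp [SW] at h, fun _ _ h => by simp [SW] at h⟩

/-- `D̄_μ : SW → D̄(U, μ(ar))`. -/
noncomputable def dbarMu {U : SigGraph Ω ar} (μ : Hom (P Ω ar) U) :
    Hom (SW Ω ar) (U.Dbar (μ.toFun false)) where
  toFun := fun x => match x with
    | some b => Sum.inl (μ.toFun b)
    | none => Sum.inr ()
  map_label := fun _ _ h => by simp [SW] at h
  map_succ := fun _ _ h => by simp [SW] at h

/-- A graph with a single unlabeled node. -/
def oneUnlabeled (Ω : Type) (ar : Ω → ℕ) : SigGraph Ω ar :=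
  ⟨PUnit, fun _ => none, fun _ => [], fun _ _ h => by simp at h, fun _ _ => rfl⟩

/-- A graph with a single node labeled `a` (looping on itself `ar a` times). -/
def singleLabeled (a : Ω) : SigGraph Ω ar :=
  ⟨PUnit, fun _ => some a, fun _ => List.replicate (ar a) PUnit.unit,
   fun _ f h => by cases h; simp, fun _ h => by simp at h⟩

/-- The unique homomorphism from the one-point unlabeled graph to `singleLabeled a`. -/
def toSingle (a : Ω) : Hom (oneUnlabeled Ω ar) (singleLabeled a) :=
  ⟨fun _ => PUnit.unit, fun _ _ h => by simp [oneUnlabeled] at h,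
   fun _ _ h => by simp [oneUnlabeled] at h⟩

end SigGraph

/-!
The node map of the candidate mediating morphism is forced by the pushout of node sets. It
preserves labels and successors at a labeled node `ψᵢ(n)` because on the image of `ψᵢ` it agrees
with the cocone leg out of `Gᵢ`, which is a homomorphism; and by the covering hypothesis every
labeled node of `G₃` is of this form with `n` labeled. Uniqueness is inherited from `Set`,
since a homomorphism is determined by its node map.
-/

namespace SigGraph

variable {Ω : Type} {ar : Ω → ℕ}

def nodes : SigGraph Ω ar ⥤ Type where
  obj G := G.N
  map φ := TypeCat.ofHom φ.toFun

instance : (nodes : SigGraph Ω ar ⥤ Type).Faithful where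
  map_injective h := Hom.ext (funext (types_congr_hom h))

section OfJointlyCovering

variable {G₁ G₂ K H : SigGraph Ω ar}

lemma Hom.map_label_succ_of_comp_eq (ψ : Hom G₁ K) (χ : Hom G₁ H) {h : K.N → H.N}
    (hχ : ∀ n, h (ψ.toFun n) = χ.toFun n) {n : G₁.N} {f : Ω} (hn : (G₁.label n).isSome)
    (hf : K.label (ψ.toFun n) = some f) :
    H.label (h (ψ.toFun n)) = some f ∧ H.succ (h (ψ.toFun n)) = (K.succ (ψ.toFun n)).map h := by
  obtain ⟨g, hg⟩ := Option.isSome_iff_exists.mp hn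
  obtain rfl : g = f := Option.some_injective _ ((ψ.map_label n g hg).symm.trans hf)
  refine ⟨hχ n ▸ χ.map_label n g hg, ?_⟩
  rw [hχ, χ.map_succ n g hg, ψ.map_succ n g hg, List.map_map]
  exact List.map_congr_left fun m _ => (hχ m).symm

def Hom.ofJointlyCovering (ψ₁ : Hom G₁ K) (ψ₂ : Hom G₂ K)
    (hcover : ∀ n : K.N, (K.label n).isSome →
      (∃ n₁, (G₁.label n₁).isSome ∧ ψ₁.toFun n₁ = n) ∨
      (∃ n₂, (G₂.label n₂).isSome ∧ ψ₂.toFun n₂ = n))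
    (h : K.N → H.N) (χ₁ : Hom G₁ H) (χ₂ : Hom G₂ H)
    (h₁ : ∀ n, h (ψ₁.toFun n) = χ₁.toFun n) (h₂ : ∀ n, h (ψ₂.toFun n) = χ₂.toFun n) :
    Hom K H where
  toFun := h
  map_label n f hf := by
    rcases hcover n (by simp [hf]) with ⟨n, hn, rfl⟩ | ⟨n, hn, rfl⟩
    exacts [(ψ₁.map_label_succ_of_comp_eq χ₁ h₁ hn hf).1,
      (ψ₂.map_label_succ_of_comp_eq χ₂ h₂ hn hf).1]
  map_succ n f hf := by
    rcases hcover n (by simp [hf]) with ⟨n, hn, rfl⟩ | ⟨n, hn, rfl⟩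
    exacts [(ψ₁.map_label_succ_of_comp_eq χ₁ h₁ hn hf).2,
      (ψ₂.map_label_succ_of_comp_eq χ₂ h₂ hn hf).2]

end OfJointlyCovering

end SigGraph

open SigGraph Limits in
/-- Pushout recognition: a commutative square of graphs whose node-set
square is a pushout in `Set` and such that every labeled node of the apex is the image
of a labeled node along one of the two cospan legs, is a pushout in the category of graphs. -/
theorem pushout_of_graphs_from_pushout_of_sets {Ω : Type} {ar : Ω → ℕ}
    {G₀ G₁ G₂ G₃ : SigGraph Ω ar}
    (φ₁ : SigGraph.Hom G₀ G₁) (φ₂ : SigGraph.Hom G₀ G₂)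
    (ψ₁ : SigGraph.Hom G₁ G₃) (ψ₂ : SigGraph.Hom G₂ G₃)
    (hcomm : φ₁.comp ψ₁ = φ₂.comp ψ₂)
    (hset : IsPushout (C := Type) (TypeCat.ofHom φ₁.toFun) (TypeCat.ofHom φ₂.toFun)
      (TypeCat.ofHom ψ₁.toFun) (TypeCat.ofHom ψ₂.toFun))
    (hcover : ∀ n₃ : G₃.N, (G₃.label n₃).isSome →
      (∃ n₁, (G₁.label n₁).isSome ∧ ψ₁.toFun n₁ = n₃) ∨
      (∃ n₂, (G₂.label n₂).isSome ∧ ψ₂.toFun n₂ = n₃)) :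
    IsPushout (C := SigGraph Ω ar) φ₁ φ₂ ψ₁ ψ₂ := by
  change IsPushout (nodes.map φ₁) (nodes.map φ₂) (nodes.map ψ₁) (nodes.map ψ₂) at hset
  have desc_comm (s : PushoutCocone φ₁ φ₂) :
      nodes.map φ₁ ≫ nodes.map s.inl = nodes.map φ₂ ≫ nodes.map s.inr := by
    simp only [← Functor.map_comp, s.condition]
  let desc (s : PushoutCocone φ₁ φ₂) : G₃ ⟶ s.pt :=
    Hom.ofJointlyCovering ψ₁ ψ₂ hcover
      ⇑(hset.desc (nodes.map s.inl) (nodes.map s.inr) (desc_comm s)) s.inl s.inr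
      (types_congr_hom (hset.inl_desc (nodes.map s.inl) (nodes.map s.inr) (desc_comm s)))
      (types_congr_hom (hset.inr_desc (nodes.map s.inl) (nodes.map s.inr) (desc_comm s)))
  have nodes_map_desc (s : PushoutCocone φ₁ φ₂) :
      nodes.map (desc s) = hset.desc (nodes.map s.inl) (nodes.map s.inr) (desc_comm s) := rfl
  refine IsPushout.of_isColimit' ⟨hcomm⟩ (PushoutCocone.IsColimit.mk _ desc
    (fun s => nodes.map_injective ?_) (fun s => nodes.map_injective ?_)
    (fun s m hl hr => nodes.map_injective ?_))
  · rw [nodes.map_comp, nodes_map_desc, hset.inl_desc]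
  · rw [nodes.map_comp, nodes_map_desc, hset.inr_desc]
  · exact hset.hom_ext
      (by rw [← nodes.map_comp, hl, nodes_map_desc, hset.inl_desc])
      (by rw [← nodes.map_comp, hr, nodes_map_desc, hset.inr_desc])
end

section
/- Let μ : L → U be an Ω-injective graph homomorphism and let L ← D(L,E) → R be an LRR-rewrite rule with right leg ρ. In the equivalence relation ∼ on N_R + N_{D(U,μ(E))} generated by D_{μ,E}(n) ∼ ρ(n) for n ∈ N_{D(L,E)}, the restriction of the quotient map to the labeled nodes of R is injective: if n_R, n_R' are labeled nodes of R with n_R ∼ n_R', then n_R = n_R'. -/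
open CategoryTheory

/-!
The relation `∼` is glued from `D_{μ,E}` and `ρ`, so it suffices to find a map out of
`N_{D(U,μ(E))} + N_R` that agrees on `D_{μ,E}(a)` and `ρ(a)` for every node `a` of `D(L,E)` and
fixes the labeled nodes of `R`. Send a node `μ(m)` of `U` with `m` labeled to `ρ(m)` (well defined
by `Ω`-injectivity), a node `ρ(m)` of `R` with `m` unlabeled to the image of `μ(m)` (well defined
since `ρ` is injective on unlabeled nodes), and the fresh node `μ(e)[i]` to the image of
`ρ(e[i])` (well defined since `μ` is injective on edges). The first clause of the rule makes the
second case disjoint from the labeled nodes of `R`, which are therefore fixed.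
-/

namespace SigGraph

variable {Ω : Type} {ar : Ω → ℕ}

theorem OmegaInjective.edgeMap_injective {G H : SigGraph Ω ar} {μ : Hom G H}
    (hμ : OmegaInjective μ) : Function.Injective μ.edgeMap := by
  rintro ⟨n, i⟩ ⟨n', i'⟩ h
  obtain rfl : n = n' :=
    hμ n n' (Edge.label_isSome ⟨n, i⟩) (Edge.label_isSome ⟨n', i'⟩) (congrArg Sigma.fst h)
  have hi : (i : ℕ) = i' := congrArg (fun e : H.Edge => (e.2 : ℕ)) h
  exact congrArg (Sigma.mk n) (Fin.ext hi)

section Collapse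

variable {L R U : SigGraph Ω ar} {E : Set L.Edge} (ρ : Hom (L.D E) R) (μ : Hom L U)

open Classical in
noncomputable def collapseU (u : U.N) : U.N ⊕ R.N :=
  if h : ∃ m : L.N, (L.label m).isSome ∧ μ.toFun m = u
  then Sum.inr (ρ.toFun (Sum.inl h.choose)) else Sum.inl u

open Classical in
noncomputable def collapseR (r : R.N) : U.N ⊕ R.N :=
  if h : ∃ m : L.N, L.label m = none ∧ ρ.toFun (Sum.inl m) = r
  then collapseU ρ μ (μ.toFun h.choose) else Sum.inr r

noncomputable def collapse : (U.D (μ.edgeMap '' E)).N ⊕ R.N → U.N ⊕ R.N :=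
  Sum.elim
    (Sum.elim (collapseU ρ μ)
      (fun e => collapseR ρ μ (ρ.toFun (Sum.inr ⟨e.2.choose, e.2.choose_spec.1⟩))))
    (collapseR ρ μ)

variable {ρ μ}

theorem collapseU_apply_of_isSome (hμ : OmegaInjective μ) {m : L.N}
    (hm : (L.label m).isSome) : collapseU ρ μ (μ.toFun m) = Sum.inr (ρ.toFun (Sum.inl m)) := by
  have h : ∃ m' : L.N, (L.label m').isSome ∧ μ.toFun m' = μ.toFun m := ⟨m, hm, rfl⟩
  rw [collapseU, dif_pos h, hμ _ _ h.choose_spec.1 hm h.choose_spec.2]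

theorem collapseR_apply_of_isNone (hρ : IsLRRRule E ρ) {m : L.N} (hm : L.label m = none) :
    collapseR ρ μ (ρ.toFun (Sum.inl m)) = collapseU ρ μ (μ.toFun m) := by
  have h : ∃ m' : L.N, L.label m' = none ∧ ρ.toFun (Sum.inl m') = ρ.toFun (Sum.inl m) :=
    ⟨m, hm, rfl⟩
  rw [collapseR, dif_pos h, hρ.2 _ _ h.choose_spec.1 hm h.choose_spec.2]

theorem collapseR_of_isSome (hρ : IsLRRRule E ρ) {r : R.N} (hr : (R.label r).isSome) :
    collapseR ρ μ r = Sum.inr r := by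
  refine dif_neg ?_
  rintro ⟨m, hm, rfl⟩
  simp [hρ.1 m hm] at hr

theorem collapse_dmapFun (hρ : IsLRRRule E ρ) (hμ : OmegaInjective μ) (a : (L.D E).N) :
    collapse ρ μ (Sum.inl (dmapFun μ E a)) = collapse ρ μ (Sum.inr (ρ.toFun a)) := by
  rcases a with m | e
  · change collapseU ρ μ (μ.toFun m) = collapseR ρ μ (ρ.toFun (Sum.inl m))
    cases hm : L.label m with
    | none => rw [collapseR_apply_of_isNone hρ hm]
    | some f =>
      have hρm : (R.label (ρ.toFun (Sum.inl m))).isSome := by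
        rw [ρ.map_label (Sum.inl m) f hm]; rfl
      rw [collapseU_apply_of_isSome hμ (by rw [hm]; rfl), collapseR_of_isSome hρ hρm]
  · have he : μ.edgeMap e.1 ∈ μ.edgeMap '' E := Set.mem_image_of_mem _ e.2
    have hpre : he.choose = e.1 := hμ.edgeMap_injective he.choose_spec.2
    change collapseR ρ μ (ρ.toFun (Sum.inr ⟨he.choose, he.choose_spec.1⟩)) = _
    simp only [hpre]
    rfl

theorem collapse_eq_of_eqvGen (hρ : IsLRRRule E ρ) (hμ : OmegaInjective μ)
    {d : Hom (L.D E) (U.D (μ.edgeMap '' E))} (hd : d.toFun = dmapFun μ E)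
    {x y : (U.D (μ.edgeMap '' E)).N ⊕ R.N} (h : Relation.EqvGen (spanRel d ρ) x y) :
    collapse ρ μ x = collapse ρ μ y := by
  have hrel : ∀ x y, spanRel d ρ x y → collapse ρ μ x = collapse ρ μ y := by
    rintro _ _ ⟨a, rfl, rfl⟩
    rw [hd]
    exact collapse_dmapFun hρ hμ a
  exact congrArg (Quot.lift _ hrel) (Quot.eqvGen_sound h)

end Collapse

end SigGraph

/-- In the equivalence relation generated by `D_{μ,E}(n) ∼ ρ(n)` on
`N_{D(U,μ(E))} + N_R`, the quotient map is injective on labeled nodes of `R`. -/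
theorem quotient_injective_on_labeled_R {Ω : Type} {ar : Ω → ℕ} {L R U : SigGraph Ω ar}
    (E : Set L.Edge) (ρ : SigGraph.Hom (L.D E) R) (hrule : SigGraph.IsLRRRule E ρ)
    (μ : SigGraph.Hom L U) (hμ : SigGraph.OmegaInjective μ) :
    ∀ d : SigGraph.Hom (L.D E) (U.D (μ.edgeMap '' E)), d.toFun = SigGraph.dmapFun μ E →
      ∀ n n' : R.N, (R.label n).isSome → (R.label n').isSome →
        Relation.EqvGen (SigGraph.spanRel d ρ) (Sum.inr n) (Sum.inr n') → n = n' := by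
  intro d hd n n' hn hn' hrel
  have h := SigGraph.collapse_eq_of_eqvGen hrule hμ hd hrel
  change SigGraph.collapseR ρ μ n = SigGraph.collapseR ρ μ n' at h
  rw [SigGraph.collapseR_of_isSome hrule hn, SigGraph.collapseR_of_isSome hrule hn'] at h
  exact Sum.inr_injective h
end
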